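/- arXiv:2212.14579 — 3 statements merged into one kernel-verified Lean document; each statement's English description precedes it below -/
import Mathlib

section
/- There exists a constant L ≥ 0 such that for every holomorphic function f on the unit disc Δ omitting the values 0 and 1, the spherical derivative satisfies |f'(z)|(1 − |z|²)/(1 + |f(z)|²) ≤ L for all z ∈ Δ. -/
/-!
Write `f = exp (2πi g)`; since `f` omits `1`, `g` omits the integers. With holomorphic square
roots `s = √g` and `t = √(g - 1)`, the function `H = log (s + t)` satisfies `sinh H = t`, so
`sinh ∘ H` omits the integers too. The points where `sinh` is an integer form a `5`-dense subset
of `ℂ`, while by Landau's theorem `H` covers a disc of radius `|H'(0)| / 96`; hence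
`|H'(0)| ≤ 480`. Unwinding the chain rule bounds `|f'(0)|` by a multiple of `1 + |f(0)|²`, and
precomposing with a disc automorphism moves any point to the origin.
-/

open Metric Complex ComplexConjugate Set Filter Topology
open scoped Real

section Logarithm

variable {c : ℂ} {r : ℝ} {u : ℂ → ℂ}

theorem exists_log_of_ne_zero (hu : DifferentiableOn ℂ u (ball c r))
    (hu₀ : ∀ z ∈ ball c r, u z ≠ 0) :
    ∃ v : ℂ → ℂ, v c = log (u c) ∧ (∀ z ∈ ball c r, exp (v z) = u z) ∧
      ∀ z ∈ ball c r, HasDerivAt v (deriv u z / u z) z := by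
  obtain ⟨v, hvc, hv⟩ :=
    ((hu.deriv isOpen_ball).div hu hu₀).isExactOn_ball.with_val_at c (log (u c))
  refine ⟨v, hvc, fun z hz => ?_, hv⟩
  have hc : c ∈ ball c r := mem_ball_self (pos_of_mem_ball hz)
  have hconst : ∀ w ∈ ball c r, HasDerivAt (fun w => u w * exp (-v w)) 0 w := by
    intro w hw
    refine (((hu.differentiableAt (isOpen_ball.mem_nhds hw)).hasDerivAt).mul
      (hv w hw).neg.cexp).congr_deriv ?_
    simp only [Pi.div_apply]
    field_simp [hu₀ w hw]
    ring
  have := isOpen_ball.is_const_of_deriv_eq_zero (convex_ball c r).isPreconnected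
    (fun w hw => (hconst w hw).differentiableAt.differentiableWithinAt)
    (fun w hw => (hconst w hw).deriv) hz hc
  rw [hvc, exp_neg, exp_neg, exp_log (hu₀ c hc), mul_inv_cancel₀ (hu₀ c hc),
    mul_inv_eq_one₀ (exp_ne_zero _)] at this
  exact this.symm

theorem exists_sq_eq_of_ne_zero (hu : DifferentiableOn ℂ u (ball c r))
    (hu₀ : ∀ z ∈ ball c r, u z ≠ 0) :
    ∃ s : ℂ → ℂ, ∀ z ∈ ball c r, s z ^ 2 = u z ∧ HasDerivAt s (deriv u z / (2 * s z)) z := by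
  obtain ⟨v, -, hexp, hv⟩ := exists_log_of_ne_zero hu hu₀
  have hsq : ∀ z, exp (v z / 2) ^ 2 = exp (v z) := fun z => by
    rw [← exp_nat_mul]; congr 1; push_cast; ring
  refine ⟨fun z => exp (v z / 2), fun z hz => ⟨(hsq z).trans (hexp z hz), ?_⟩⟩
  refine ((hv z hz).div_const 2).cexp.congr_deriv ?_
  rw [← hexp z hz, ← hsq z]
  field_simp [exp_ne_zero]

theorem exists_sinh_sq_eq_sub_one {g : ℂ → ℂ} (hg : DifferentiableOn ℂ g (ball c r))
    (hg₀ : ∀ z ∈ ball c r, g z ≠ 0) (hg₁ : ∀ z ∈ ball c r, g z ≠ 1) :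
    ∃ H : ℂ → ℂ, DifferentiableOn ℂ H (ball c r) ∧
      (∀ z ∈ ball c r, sinh (H z) ^ 2 = g z - 1) ∧
      ∀ z ∈ ball c r, ‖deriv g z‖ ≤ 2 * (‖g z‖ + 1) * ‖deriv H z‖ := by
  obtain ⟨s, hs⟩ := exists_sq_eq_of_ne_zero hg hg₀
  obtain ⟨t, ht⟩ := exists_sq_eq_of_ne_zero (hg.sub_const 1)
    fun z hz => sub_ne_zero.mpr (hg₁ z hz)
  simp only [deriv_sub_const] at ht
  -- `s + t` is a unit with inverse `s - t`, so `H = log (s + t) = arsinh t`.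
  have hunit : ∀ z ∈ ball c r, (s z + t z) * (s z - t z) = 1 := fun z hz => by
    linear_combination (hs z hz).1 - (ht z hz).1
  have hst : ∀ z ∈ ball c r, HasDerivAt (fun w => s w + t w)
      (deriv g z / (2 * s z) + deriv g z / (2 * t z)) z :=
    fun z hz => (hs z hz).2.add (ht z hz).2
  obtain ⟨H, -, hexp, hH⟩ := exists_log_of_ne_zero
    (fun z hz => (hst z hz).differentiableAt.differentiableWithinAt)
    fun z hz => left_ne_zero_of_mul_eq_one (hunit z hz)
  refine ⟨H, fun z hz => (hH z hz).differentiableAt.differentiableWithinAt,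
    fun z hz => ?_, fun z hz => ?_⟩
  · have hsinh : sinh (H z) = t z := by
      rw [sinh, exp_neg, hexp z hz, inv_eq_of_mul_eq_one_right (hunit z hz)]
      ring
    rw [hsinh, (ht z hz).1]
  · have hs₀ : s z ≠ 0 := by
      intro h; exact hg₀ z hz (by rw [← (hs z hz).1, h]; ring)
    have ht₀ : t z ≠ 0 := by
      intro h; exact hg₁ z hz (by linear_combination -(ht z hz).1 + h * t z)
    have hderiv : deriv g z = 2 * (s z * t z) * deriv H z := by
      have hsum : s z + t z ≠ 0 := left_ne_zero_of_mul_eq_one (hunit z hz)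
      rw [(hH z hz).deriv, (hst z hz).deriv]
      field_simp
      ring
    have hnorm : ‖s z * t z‖ ≤ ‖g z‖ + 1 := by
      have hsq : ‖s z * t z‖ ^ 2 = ‖g z‖ * ‖g z - 1‖ := by
        rw [← norm_pow, mul_pow, (hs z hz).1, (ht z hz).1, norm_mul]
      have := norm_sub_le (g z) 1
      rw [norm_one] at this
      nlinarith [norm_nonneg (s z * t z), norm_nonneg (g z)]
    rw [hderiv, norm_mul, norm_mul, RCLike.norm_ofNat]
    gcongr

end Logarithm

section Bloch

variable {F : ℂ → ℂ} {a : ℂ} {r : ℝ}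

theorem norm_deriv_sub_le_of_norm_deriv_le (hF : DifferentiableOn ℂ F (ball a r))
    (hbd : ∀ w ∈ ball a r, ‖deriv F w‖ ≤ 2 * ‖deriv F a‖) {z : ℂ} (hz : z ∈ ball a r) :
    ‖deriv F z - deriv F a‖ ≤ 3 * ‖deriv F a‖ / r * ‖z - a‖ := by
  have hmaps : MapsTo (deriv F) (ball a r) (closedBall (deriv F a) (3 * ‖deriv F a‖)) :=
    fun w hw => by
      rw [mem_closedBall, dist_eq_norm]
      linarith [norm_sub_le (deriv F w) (deriv F a), hbd w hw]
  simpa only [dist_eq_norm] using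
    dist_le_div_mul_dist_of_mapsTo_ball (hF.deriv isOpen_ball) hmaps hz

theorem mul_norm_sub_le_norm_sub_of_norm_deriv_le (hF : DifferentiableOn ℂ F (ball a r))
    (hbd : ∀ w ∈ ball a r, ‖deriv F w‖ ≤ 2 * ‖deriv F a‖) (hr : 0 < r) {z : ℂ}
    (hz : z ∈ closedBall a (r / 6)) :
    ‖deriv F a‖ / 2 * ‖z - a‖ ≤ ‖F z - F a‖ := by
  set d := deriv F a
  have hsub : closedBall a (r / 6) ⊆ ball a r := closedBall_subset_ball (by linarith)
  have hlin : ∀ w ∈ closedBall a (r / 6),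
      HasDerivWithinAt (fun w => F w - d * w) (deriv F w - d) (closedBall a (r / 6)) w :=
    fun w hw => ((hF.differentiableAt (isOpen_ball.mem_nhds (hsub hw))).hasDerivAt.sub
      ((hasDerivAt_id w).const_mul d)).hasDerivWithinAt.congr_deriv (by simp)
  have hlin_bd : ∀ w ∈ closedBall a (r / 6), ‖deriv F w - d‖ ≤ ‖d‖ / 2 := fun w hw => by
    have hw' : ‖w - a‖ ≤ r / 6 := by rwa [mem_closedBall, dist_eq_norm] at hw
    calc ‖deriv F w - d‖ ≤ 3 * ‖d‖ / r * ‖w - a‖ :=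
          norm_deriv_sub_le_of_norm_deriv_le hF hbd (hsub hw)
      _ ≤ 3 * ‖d‖ / r * (r / 6) := by gcongr
      _ = ‖d‖ / 2 := by field_simp; ring
  have hmvt := (convex_closedBall a (r / 6)).norm_image_sub_le_of_norm_hasDerivWithin_le
    hlin hlin_bd (mem_closedBall_self (by linarith)) hz
  have htri : ‖d * (z - a)‖ ≤ ‖F z - F a‖ + ‖F z - d * z - (F a - d * a)‖ := by
    rw [show d * (z - a) = F z - F a - (F z - d * z - (F a - d * a)) by ring]
    exact norm_sub_le _ _
  rw [norm_mul] at htri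
  linarith

theorem ball_subset_image_of_norm_deriv_le (hF : DifferentiableOn ℂ F (ball a r))
    (hbd : ∀ w ∈ ball a r, ‖deriv F w‖ ≤ 2 * ‖deriv F a‖) :
    ball (F a) (r * ‖deriv F a‖ / 24) ⊆ F '' ball a r := by
  rcases le_or_gt (r * ‖deriv F a‖) 0 with h | h
  · rw [ball_eq_empty.mpr (by linarith)]
    exact empty_subset _
  have hr : 0 < r := pos_of_mul_pos_left h (norm_nonneg _)
  have hsub : closedBall a (r / 6) ⊆ ball a r := closedBall_subset_ball (by linarith)
  have hgrowth := fun z (hz : z ∈ closedBall a (r / 6)) =>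
    mul_norm_sub_le_norm_sub_of_norm_deriv_le hF hbd hr hz
  have hsphere : ∀ z ∈ sphere a (r / 6), ‖deriv F a‖ / 2 * (r / 6) ≤ ‖F z - F a‖ :=
    fun z hz => by
      simpa only [mem_sphere_iff_norm.mp hz] using hgrowth z (sphere_subset_closedBall hz)
  have hnonconst : ∃ᶠ z in 𝓝 a, F z ≠ F a := by
    refine (Eventually.frequently (f := 𝓝[≠] a) ?_).filter_mono nhdsWithin_le_nhds
    filter_upwards [nhdsWithin_le_nhds (closedBall_mem_nhds a (by linarith : 0 < r / 6)),
      self_mem_nhdsWithin] with z hz hza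
    have := hgrowth z hz
    intro h
    rw [h, sub_self, norm_zero] at this
    have : 0 < ‖z - a‖ := norm_pos_iff.mpr (sub_ne_zero.mpr hza)
    nlinarith
  calc ball (F a) (r * ‖deriv F a‖ / 24) = ball (F a) (‖deriv F a‖ / 2 * (r / 6) / 2) := by
        congr 1; ring
    _ ⊆ F '' closedBall a (r / 6) :=
        ((hF.diffContOnCl_ball hsub).ball_subset_image_closedBall (by linarith) hsphere
          hnonconst)
    _ ⊆ F '' ball a r := image_mono hsub

/-- Landau's form of Bloch's theorem. -/
theorem exists_ball_subset_image_unitBall (hF : DifferentiableOn ℂ F (ball 0 1)) :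
    ∃ p : ℂ, ball p (‖deriv F 0‖ / 96) ⊆ F '' ball 0 1 := by
  have hK : closedBall (0 : ℂ) (1 / 2) ⊆ ball 0 1 := closedBall_subset_ball (by norm_num)
  -- maximize the weight `‖F'‖ · (1/2 - ‖·‖)` to find a point `a` where `F'` is locally controlled
  obtain ⟨a, -, hmax⟩ := (isCompact_closedBall (0 : ℂ) (1 / 2)).exists_isMaxOn
    (f := fun z => ‖deriv F z‖ * (1 / 2 - ‖z‖)) (nonempty_closedBall.mpr (by norm_num))
    (((hF.deriv isOpen_ball).continuousOn.mono hK).norm.mul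
      (continuous_const.sub continuous_norm).continuousOn)
  set ρ := (1 / 2 - ‖a‖) / 2 with hρ_def
  have h0 : ‖deriv F 0‖ / 4 ≤ ρ * ‖deriv F a‖ := by
    have := isMaxOn_iff.mp hmax _ (mem_closedBall_self (by norm_num : (0 : ℝ) ≤ 1 / 2))
    simp only [norm_zero, sub_zero] at this
    rw [hρ_def]
    linarith
  have hsub : ball a ρ ⊆ closedBall 0 (1 / 2) := fun w hw => by
    have hρ := pos_of_mem_ball hw
    have := norm_sub_norm_le w a
    rw [mem_ball, dist_eq_norm] at hw
    rw [mem_closedBall, dist_zero_right]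
    linarith
  have hbd : ∀ w ∈ ball a ρ, ‖deriv F w‖ ≤ 2 * ‖deriv F a‖ := fun w hw => by
    have hw' := isMaxOn_iff.mp hmax _ (hsub hw)
    have hρ := pos_of_mem_ball hw
    have : ρ ≤ 1 / 2 - ‖w‖ := by
      have := norm_sub_norm_le w a
      rw [mem_ball, dist_eq_norm] at hw
      linarith
    nlinarith [norm_nonneg (deriv F w)]
  refine ⟨F a, (ball_subset_ball (by linarith)).trans
    ((ball_subset_image_of_norm_deriv_le (hF.mono (hsub.trans hK)) hbd).trans
      (image_mono (hsub.trans hK)))⟩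

end Bloch

theorem Real.lipschitzWith_arsinh : LipschitzWith 1 Real.arsinh :=
  lipschitzWith_of_nnnorm_deriv_le Real.differentiable_arsinh fun x => by
    rw [(Real.hasDerivAt_arsinh x).deriv, ← NNReal.coe_le_coe, coe_nnnorm, NNReal.coe_one,
      norm_inv, Real.norm_eq_abs, abs_of_nonneg (Real.sqrt_nonneg _)]
    exact inv_le_one_of_one_le₀ (Real.one_le_sqrt.mpr (by nlinarith))

theorem exists_norm_sub_le_sinh_eq_intCast (p : ℂ) :
    ∃ q : ℂ, ‖q - p‖ ≤ 5 ∧ ∃ n : ℤ, sinh q = n := by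
  set n : ℤ := round (Real.sinh p.re)
  set m : ℤ := round (p.im / (2 * π))
  set x : ℝ := Real.arsinh n
  refine ⟨x + m * (2 * π * I), ?_, n, ?_⟩
  · have hre : |x - p.re| ≤ 1 / 2 := by
      have := Real.lipschitzWith_arsinh.dist_le_mul n (Real.sinh p.re)
      rw [Real.arsinh_sinh, NNReal.coe_one, one_mul, Real.dist_eq, Real.dist_eq,
        abs_sub_comm (n : ℝ)] at this
      exact this.trans (abs_sub_round _)
    have him : |m * (2 * π) - p.im| ≤ π := by
      have h := abs_sub_round (p.im / (2 * π))
      rw [abs_sub_comm] at h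
      calc |m * (2 * π) - p.im| = |m - p.im / (2 * π)| * (2 * π) := by
            rw [← abs_of_pos Real.two_pi_pos, ← abs_mul, abs_of_pos Real.two_pi_pos]
            congr 1; field_simp
        _ ≤ 1 / 2 * (2 * π) := by gcongr
        _ = π := by ring
    set q : ℂ := x + m * (2 * π * I)
    calc ‖q - p‖ ≤ |(q - p).re| + |(q - p).im| := norm_le_abs_re_add_abs_im _
      _ ≤ 1 / 2 + π := by
          refine add_le_add (le_of_eq_of_le ?_ hre) (le_of_eq_of_le ?_ him) <;> simp [q]
      _ ≤ 5 := by linarith [Real.pi_le_four]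
  · rw [sinh_periodic.int_mul m x, ← ofReal_sinh, Real.sinh_arsinh, ofReal_intCast]

theorem norm_deriv_le_of_sinh_ne_intCast {H : ℂ → ℂ} (hH : DifferentiableOn ℂ H (ball 0 1))
    (hH_int : ∀ z ∈ ball (0 : ℂ) 1, ∀ n : ℤ, sinh (H z) ≠ n) :
    ‖deriv H 0‖ ≤ 480 := by
  obtain ⟨p, hp⟩ := exists_ball_subset_image_unitBall hH
  by_contra! hlarge
  obtain ⟨q, hqp, n, hqn⟩ := exists_norm_sub_le_sinh_eq_intCast p
  obtain ⟨z, hz, hzq⟩ := hp (mem_ball_iff_norm.mpr (by linarith) : q ∈ _)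
  exact hH_int z hz n (hzq ▸ hqn)

theorem norm_deriv_le_of_ne_intCast {g : ℂ → ℂ} (hg : DifferentiableOn ℂ g (ball 0 1))
    (hg_int : ∀ z ∈ ball (0 : ℂ) 1, ∀ n : ℤ, g z ≠ n) :
    ‖deriv g 0‖ ≤ 960 * (‖g 0‖ + 1) := by
  obtain ⟨H, hH, hsinh, hderiv⟩ := exists_sinh_sq_eq_sub_one hg
    (fun z hz => by simpa using hg_int z hz 0) (fun z hz => by simpa using hg_int z hz 1)
  have hH_int : ∀ z ∈ ball (0 : ℂ) 1, ∀ n : ℤ, sinh (H z) ≠ n := fun z hz n h =>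
    hg_int z hz (n ^ 2 + 1) <| by
      push_cast
      linear_combination -(hsinh z hz) + (sinh (H z) + n) * h
  have h0 : (0 : ℂ) ∈ ball (0 : ℂ) 1 := mem_ball_self one_pos
  calc ‖deriv g 0‖ ≤ 2 * (‖g 0‖ + 1) * ‖deriv H 0‖ := hderiv 0 h0
    _ ≤ 2 * (‖g 0‖ + 1) * 480 := by gcongr; exact norm_deriv_le_of_sinh_ne_intCast hH hH_int
    _ = 960 * (‖g 0‖ + 1) := by ring

theorem Real.mul_abs_log_le_one_add_sq {t : ℝ} (ht : 0 < t) : t * |Real.log t| ≤ 1 + t ^ 2 := by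
  rcases le_or_gt t 1 with h | h
  · have := Real.abs_log_mul_self_lt t ht h
    rw [abs_mul, abs_of_pos ht] at this
    nlinarith
  · rw [abs_of_pos (Real.log_pos h)]
    nlinarith [Real.log_le_sub_one_of_pos ht]

theorem Complex.norm_log_le (w : ℂ) : ‖log w‖ ≤ |Real.log ‖w‖| + π := by
  calc ‖log w‖ ≤ |(log w).re| + |(log w).im| := norm_le_abs_re_add_abs_im _
    _ ≤ |Real.log ‖w‖| + π := by
        rw [log_re, log_im]; gcongr; exact abs_arg_le_pi w

theorem norm_deriv_le_of_ne_zero_one {f : ℂ → ℂ} (hf : DifferentiableOn ℂ f (ball 0 1))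
    (hf₀₁ : ∀ z ∈ ball (0 : ℂ) 1, f z ≠ 0 ∧ f z ≠ 1) :
    ‖deriv f 0‖ ≤ 960 * (1 + 3 * π) * (1 + ‖f 0‖ ^ 2) := by
  obtain ⟨v, hv0, hexp, hv⟩ := exists_log_of_ne_zero hf fun z hz => (hf₀₁ z hz).1
  have h2πI : (2 * π * I : ℂ) ≠ 0 := two_pi_I_ne_zero
  have h2πI_norm : ‖(2 * π * I : ℂ)‖ = 2 * π := by
    simp [abs_of_pos Real.pi_pos]
  set g : ℂ → ℂ := fun z => v z / (2 * π * I)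
  have hg_int : ∀ z ∈ ball (0 : ℂ) 1, ∀ n : ℤ, g z ≠ n := fun z hz n h => by
    have hvz : v z = g z * (2 * π * I) := (div_mul_cancel₀ _ h2πI).symm
    rw [h] at hvz
    exact (hf₀₁ z hz).2 (by rw [← hexp z hz, hvz, exp_int_mul_two_pi_mul_I])
  have h0 : (0 : ℂ) ∈ ball (0 : ℂ) 1 := mem_ball_self one_pos
  have hg : DifferentiableOn ℂ g (ball 0 1) := fun z hz =>
    ((hv z hz).div_const _).differentiableAt.differentiableWithinAt
  have hderiv : ‖deriv f 0‖ = 2 * π * ‖f 0‖ * ‖deriv g 0‖ := by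
    rw [((hv 0 h0).div_const _).deriv, norm_div, norm_div, h2πI_norm]
    have hf0 := norm_pos_iff.mpr (hf₀₁ 0 h0).1
    field_simp
  have hg0 : 2 * π * ‖g 0‖ ≤ |Real.log ‖f 0‖| + π := by
    rw [norm_div, hv0, h2πI_norm]
    field_simp
    exact norm_log_le _
  set T := ‖f 0‖
  have hT : 0 < T := norm_pos_iff.mpr (hf₀₁ 0 h0).1
  calc ‖deriv f 0‖ = 2 * π * T * ‖deriv g 0‖ := hderiv
    _ ≤ 2 * π * T * (960 * (‖g 0‖ + 1)) := by
        gcongr; exact norm_deriv_le_of_ne_intCast hg hg_int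
    _ = 960 * T * (2 * π * ‖g 0‖ + 2 * π) := by ring
    _ ≤ 960 * T * (|Real.log T| + 3 * π) := by gcongr 960 * T * ?_; linarith
    _ = 960 * (T * |Real.log T| + 3 * π * T) := by ring
    _ ≤ 960 * ((1 + T ^ 2) + 3 * π * (1 + T ^ 2)) := by
        gcongr
        · exact Real.mul_abs_log_le_one_add_sq hT
        · nlinarith
    _ = 960 * (1 + 3 * π) * (1 + T ^ 2) := by ring

section DiscAutomorphism

noncomputable def discAutomorphism (z w : ℂ) : ℂ := (w + z) / (1 + conj z * w)

variable {z : ℂ}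

theorem normSq_one_add_conj_mul_sub_normSq_add (z w : ℂ) :
    normSq (1 + conj z * w) - normSq (w + z) = (1 - normSq z) * (1 - normSq w) := by
  simp only [normSq_apply, add_re, add_im, mul_re, mul_im, one_re, one_im, conj_re, conj_im]
  ring

theorem one_add_conj_mul_ne_zero (hz : ‖z‖ < 1) {w : ℂ} (hw : ‖w‖ < 1) :
    1 + conj z * w ≠ 0 := by
  intro h
  have : ‖conj z * w‖ < 1 := by
    rw [norm_mul, RCLike.norm_conj]
    nlinarith [norm_nonneg z, norm_nonneg w]
  rw [eq_neg_of_add_eq_zero_right h, norm_neg, norm_one] at this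
  exact lt_irrefl _ this

theorem mapsTo_discAutomorphism (hz : ‖z‖ < 1) :
    MapsTo (discAutomorphism z) (ball 0 1) (ball 0 1) := by
  intro w hw
  rw [mem_ball_zero_iff] at hw ⊢
  rw [discAutomorphism, norm_div, div_lt_one (norm_pos_iff.mpr (one_add_conj_mul_ne_zero hz hw)),
    ← sq_lt_sq₀ (norm_nonneg _) (norm_nonneg _), ← normSq_eq_norm_sq, ← normSq_eq_norm_sq,
    ← sub_pos, normSq_one_add_conj_mul_sub_normSq_add]
  rw [normSq_eq_norm_sq, normSq_eq_norm_sq]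
  exact mul_pos (by nlinarith [norm_nonneg z]) (by nlinarith [norm_nonneg w])

theorem differentiableOn_discAutomorphism (hz : ‖z‖ < 1) :
    DifferentiableOn ℂ (discAutomorphism z) (ball 0 1) := fun _ hw =>
  ((differentiableAt_id.add_const z).div ((differentiableAt_id.const_mul _).const_add 1)
    (one_add_conj_mul_ne_zero hz (mem_ball_zero_iff.mp hw))).differentiableWithinAt

theorem discAutomorphism_zero (z : ℂ) : discAutomorphism z 0 = z := by
  simp [discAutomorphism]

theorem hasDerivAt_discAutomorphism_zero (z : ℂ) :
    HasDerivAt (discAutomorphism z) ((1 - ‖z‖ ^ 2 : ℝ) : ℂ) 0 := by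
  have := ((hasDerivAt_id (0 : ℂ)).add_const z).div
    (((hasDerivAt_id (0 : ℂ)).const_mul (conj z)).const_add 1) (by simp)
  refine this.congr_deriv ?_
  simp only [id, mul_zero, add_zero, zero_add, mul_one, one_pow, div_one]
  rw [mul_conj, normSq_eq_norm_sq]
  push_cast
  ring

end DiscAutomorphism

/-- Uniform bound on the invariant spherical derivative for holomorphic functions on
the unit disc omitting 0 and 1. -/
theorem marty_bound_omitting_zero_one :
    ∃ L : ℝ, 0 ≤ L ∧ ∀ f : ℂ → ℂ, DifferentiableOn ℂ f (ball 0 1) →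
      (∀ z ∈ ball (0 : ℂ) 1, f z ≠ 0 ∧ f z ≠ 1) →
      ∀ z ∈ ball (0 : ℂ) 1,
        ‖deriv f z‖ * (1 - ‖z‖ ^ 2) / (1 + ‖f z‖ ^ 2) ≤ L := by
  refine ⟨960 * (1 + 3 * π), by positivity, fun f hf hf₀₁ z hz => ?_⟩
  have hz1 : ‖z‖ < 1 := mem_ball_zero_iff.mp hz
  have hφ := mapsTo_discAutomorphism hz1
  have hbound := norm_deriv_le_of_ne_zero_one
    (hf.comp (differentiableOn_discAutomorphism hz1) hφ) fun w hw => hf₀₁ _ (hφ hw)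
  have hchain : deriv (f ∘ discAutomorphism z) 0 = deriv f z * ((1 - ‖z‖ ^ 2 : ℝ) : ℂ) := by
    refine HasDerivAt.deriv ?_
    refine HasDerivAt.comp 0 ?_ (hasDerivAt_discAutomorphism_zero z)
    rw [discAutomorphism_zero]
    exact (hf.differentiableAt (isOpen_ball.mem_nhds hz)).hasDerivAt
  rw [hchain, norm_mul, norm_real, Real.norm_of_nonneg (by nlinarith [norm_nonneg z]),
    Function.comp_apply, discAutomorphism_zero] at hbound
  rw [div_le_iff₀ (by positivity)]
  exact hbound
end

section
/- Let f be holomorphic on the unit disc Δ, with f nonvanishing, and suppose there is a constant L such that |f'(w)|(1 − |w|²)/(1 + |f(w)|²) ≤ L for all w ∈ Δ. Then for every z ∈ Δ with |z| < r < 1, |arctan|f(z)| − arctan|f(0)|| ≤ 2rL/(1 − r²). -/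
open Metric Real Set
open scoped RealInnerProductSpace

/-! Along the radius `t ↦ f (t z)` the derivative of `arctan ‖f‖` is at most
`‖f'‖ ‖z‖ / (1 + ‖f‖²)` in absolute value (Cauchy–Schwarz, where `f ≠ 0` makes `‖f‖`
differentiable), and the spherical derivative bound makes this at most `r L / (1 - r²)`;
the mean value inequality on `[0, 1]` concludes. -/

theorem HasDerivAt.norm {F : Type*} [NormedAddCommGroup F] [InnerProductSpace ℝ F]
    {g : ℝ → F} {g' : F} {t : ℝ} (hg : HasDerivAt g g' t) (h0 : g t ≠ 0) :
    HasDerivAt (fun s => ‖g s‖) (⟪g t, g'⟫ / ‖g t‖) t := by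
  have h := hg.norm_sq.sqrt (pow_ne_zero 2 (norm_ne_zero_iff.2 h0))
  simp only [Real.sqrt_sq (norm_nonneg _)] at h
  convert h using 1
  field_simp

theorem abs_arctan_norm_sub_le {F : Type*} [NormedAddCommGroup F] [InnerProductSpace ℝ F]
    {g g' : ℝ → F} {a b C : ℝ} (hab : a ≤ b) (hg : ∀ t ∈ Icc a b, HasDerivAt g (g' t) t)
    (h0 : ∀ t ∈ Icc a b, g t ≠ 0) (hC : ∀ t ∈ Ico a b, ‖g' t‖ / (1 + ‖g t‖ ^ 2) ≤ C) :
    |arctan ‖g b‖ - arctan ‖g a‖| ≤ C * (b - a) := by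
  have hderiv : ∀ t ∈ Icc a b, HasDerivAt (fun s => arctan ‖g s‖)
      (1 / (1 + ‖g t‖ ^ 2) * (⟪g t, g' t⟫ / ‖g t‖)) t :=
    fun t ht => ((hg t ht).norm (h0 t ht)).arctan
  refine norm_image_sub_le_of_norm_deriv_le_segment' (fun t ht => (hderiv t ht).hasDerivWithinAt)
    (fun t ht => le_trans ?_ (hC t ht)) b ⟨hab, le_rfl⟩
  have hgt : 0 < ‖g t‖ := norm_pos_iff.2 (h0 t (Ico_subset_Icc_self ht))
  calc ‖1 / (1 + ‖g t‖ ^ 2) * (⟪g t, g' t⟫ / ‖g t‖)‖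
      = |⟪g t, g' t⟫| / ‖g t‖ / (1 + ‖g t‖ ^ 2) := by
        rw [Real.norm_eq_abs, abs_mul, abs_div, abs_div, abs_one, abs_norm,
          abs_of_pos (by positivity)]
        ring
    _ ≤ ‖g t‖ * ‖g' t‖ / ‖g t‖ / (1 + ‖g t‖ ^ 2) := by gcongr; exact abs_real_inner_le_norm _ _
    _ = ‖g' t‖ / (1 + ‖g t‖ ^ 2) := by rw [mul_div_cancel_left₀ _ hgt.ne']

theorem norm_ofReal_mul_le {t : ℝ} (ht : t ∈ Icc (0 : ℝ) 1) (z : ℂ) : ‖(t : ℂ) * z‖ ≤ ‖z‖ := by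
  rw [norm_mul, Complex.norm_real, Real.norm_of_nonneg ht.1]
  exact mul_le_of_le_one_left (norm_nonneg z) ht.2

theorem DifferentiableAt.hasDerivAt_ofReal_mul {f : ℂ → ℂ} {t : ℝ} {z : ℂ}
    (hf : DifferentiableAt ℂ f (t * z)) :
    HasDerivAt (fun s : ℝ => f (s * z)) (deriv f (t * z) * z) t := by
  have := hf.hasDerivAt.comp (t : ℂ) ((hasDerivAt_id (t : ℂ)).mul_const z)
  simpa [Function.comp_def] using this.comp_ofReal

theorem norm_deriv_mul_div_le_of_spherical_bound {f : ℂ → ℂ} {L r : ℝ} {w z : ℂ}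
    (hb : ‖deriv f w‖ * (1 - ‖w‖ ^ 2) / (1 + ‖f w‖ ^ 2) ≤ L) (hw : ‖w‖ ≤ r) (hz : ‖z‖ ≤ r)
    (hr : r < 1) :
    ‖deriv f w * z‖ / (1 + ‖f w‖ ^ 2) ≤ r * L / (1 - r ^ 2) := by
  set q := ‖deriv f w‖ / (1 + ‖f w‖ ^ 2)
  have hr0 : 0 ≤ r := (norm_nonneg z).trans hz
  have hr2 : 0 < 1 - r ^ 2 := by nlinarith
  have hq : q * (1 - r ^ 2) ≤ L :=
    calc q * (1 - r ^ 2) ≤ q * (1 - ‖w‖ ^ 2) := by gcongr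
      _ = ‖deriv f w‖ * (1 - ‖w‖ ^ 2) / (1 + ‖f w‖ ^ 2) := div_mul_eq_mul_div _ _ _
      _ ≤ L := hb
  calc ‖deriv f w * z‖ / (1 + ‖f w‖ ^ 2) = q * ‖z‖ := by rw [norm_mul]; ring
    _ ≤ q * r := by gcongr
    _ ≤ L / (1 - r ^ 2) * r := by gcongr; exact (le_div_iff₀ hr2).2 hq
    _ = r * L / (1 - r ^ 2) := by ring

theorem arctan_bound_of_spherical_bound_general (f : ℂ → ℂ)
    (hf : DifferentiableOn ℂ f (ball 0 1))
    (hnz : ∀ w ∈ ball (0 : ℂ) 1, f w ≠ 0)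
    (L : ℝ) (hL : 0 ≤ L)
    (hb : ∀ w ∈ ball (0 : ℂ) 1, ‖deriv f w‖ * (1 - ‖w‖ ^ 2) / (1 + ‖f w‖ ^ 2) ≤ L)
    (r : ℝ) (hr1 : r < 1) (z : ℂ) (hz : ‖z‖ < r) :
    |arctan ‖f z‖ - arctan ‖f 0‖| ≤ 2 * r * L / (1 - r ^ 2) := by
  have hr0 : 0 ≤ r := (norm_nonneg z).trans hz.le
  have hmem : ∀ t ∈ Icc (0 : ℝ) 1, (t : ℂ) * z ∈ ball (0 : ℂ) 1 := fun t ht =>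
    mem_ball_zero_iff.2 (((norm_ofReal_mul_le ht z).trans_lt hz).trans hr1)
  have hradial := abs_arctan_norm_sub_le (g := fun t : ℝ => f (t * z)) zero_le_one
    (fun t ht => (hf.differentiableAt (isOpen_ball.mem_nhds (hmem t ht))).hasDerivAt_ofReal_mul)
    (fun t ht => hnz _ (hmem t ht))
    (fun t ht => norm_deriv_mul_div_le_of_spherical_bound (hb _ (hmem t (Ico_subset_Icc_self ht)))
      ((norm_ofReal_mul_le (Ico_subset_Icc_self ht) z).trans hz.le) hz.le hr1)
  simp only [Complex.ofReal_one, one_mul, Complex.ofReal_zero, zero_mul, sub_zero, mul_one]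
    at hradial
  refine hradial.trans (div_le_div_of_nonneg_right ?_ (by nlinarith))
  linarith [mul_nonneg hr0 hL]

/-- Integrating the spherical derivative bound along a radius. -/
theorem arctan_bound_of_spherical_bound (f : ℂ → ℂ)
    (hf : DifferentiableOn ℂ f (ball 0 1))
    (hnz : ∀ w ∈ ball (0 : ℂ) 1, f w ≠ 0)
    (L : ℝ) (hL : 0 ≤ L)
    (hb : ∀ w ∈ ball (0 : ℂ) 1, ‖deriv f w‖ * (1 - ‖w‖ ^ 2) / (1 + ‖f w‖ ^ 2) ≤ L)
    (r : ℝ) (hr0 : 0 < r) (hr1 : r < 1) (z : ℂ) (hz : ‖z‖ < r) :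
    |arctan ‖f z‖ - arctan ‖f 0‖| ≤ 2 * r * L / (1 - r ^ 2) :=
  arctan_bound_of_spherical_bound_general f hf hnz L hL hb r hr1 z hz
end

section
/- (Little Picard Theorem) If f : ℂ → ℂ is entire and there exist two distinct complex numbers a ≠ b with a ∉ range(f) and b ∉ range(f), then f is constant. -/
/-!
Normalize so that the omitted values are `0` and `1` and take a logarithm: `f` factors through
`exp (2πi h)` with `h` entire and omitting every integer. Since `h` omits `0` and `1`, the
functions `√h` and `√(h - 1)` exist, and a logarithm `G` of `√h + √(h - 1)` satisfies
`cosh² G = h`; hence `G` omits every point where `cosh²` takes an integer value. These points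
come within distance `2` of every point of the plane. On the other hand, a Bloch-type estimate
shows that an entire function with a nonvanishing derivative somewhere has disks of every
radius in its range. So `G'` vanishes identically, and `G`, hence `h`, hence `f`, is constant.
-/

open Complex Metric Set Topology

theorem Differentiable.exists_eq_exp {f : ℂ → ℂ} (hf : Differentiable ℂ f) (hf₀ : ∀ z, f z ≠ 0) :
    ∃ L : ℂ → ℂ, Differentiable ℂ L ∧ ∀ z, f z = cexp (L z) := by
  obtain ⟨L, hL₀, hL⟩ :=
    ((hf.deriv.div hf hf₀).isExactOn_univ).with_val_at 0 (Complex.log (f 0))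
  have hL' : ∀ z, HasDerivAt L (_root_.deriv f z / f z) z := fun z => hL z (mem_univ z)
  have hderiv : ∀ z, HasDerivAt (fun z => f z * cexp (-L z)) 0 z := by
    intro z
    have hexp : HasDerivAt (fun z => cexp (-L z)) (cexp (-L z) * -(_root_.deriv f z / f z)) z :=
      (hL' z).neg.cexp
    refine ((hf z).hasDerivAt.mul hexp).congr_deriv ?_
    field_simp [hf₀ z]
    ring
  refine ⟨L, fun z => (hL' z).differentiableAt, fun z => ?_⟩
  have hconst := is_const_of_deriv_eq_zero (fun z => (hderiv z).differentiableAt)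
    (fun z => (hderiv z).deriv) z 0
  rwa [hL₀, exp_neg, exp_neg, exp_log (hf₀ 0), mul_inv_cancel₀ (hf₀ 0),
    mul_inv_eq_one₀ (exp_ne_zero _)] at hconst

theorem Differentiable.exists_sq_eq {f : ℂ → ℂ} (hf : Differentiable ℂ f) (hf₀ : ∀ z, f z ≠ 0) :
    ∃ s : ℂ → ℂ, Differentiable ℂ s ∧ ∀ z, s z ^ 2 = f z := by
  obtain ⟨L, hL, hfL⟩ := hf.exists_eq_exp hf₀
  refine ⟨fun z => cexp (L z / 2), (hL.div_const 2).cexp, fun z => ?_⟩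
  rw [← exp_nat_mul, hfL]
  congr 1
  push_cast
  ring

theorem Differentiable.exists_cosh_sq_eq {f : ℂ → ℂ} (hf : Differentiable ℂ f)
    (hf₀ : ∀ z, f z ≠ 0) (hf₁ : ∀ z, f z ≠ 1) :
    ∃ G : ℂ → ℂ, Differentiable ℂ G ∧ ∀ z, Complex.cosh (G z) ^ 2 = f z := by
  obtain ⟨s, hs, hsf⟩ := hf.exists_sq_eq hf₀
  obtain ⟨t, ht, htf⟩ := (hf.sub_const 1).exists_sq_eq fun z => sub_ne_zero.2 (hf₁ z)
  have hprod : ∀ z, (s z + t z) * (s z - t z) = 1 := fun z => by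
    linear_combination hsf z - htf z
  obtain ⟨G, hG, hGst⟩ := (hs.add ht).exists_eq_exp fun z => left_ne_zero_of_mul_eq_one (hprod z)
  refine ⟨G, hG, fun z => ?_⟩
  have hinv : cexp (-G z) = s z - t z := by
    rw [exp_neg, ← hGst]
    exact inv_eq_of_mul_eq_one_right (hprod z)
  rw [Complex.cosh, hinv, ← hGst, Pi.add_apply, ← hsf]
  ring

theorem Differentiable.exists_lift_forall_ne_intCast {f : ℂ → ℂ} (hf : Differentiable ℂ f)
    {a b : ℂ} (hab : a ≠ b) (ha : ∀ z, f z ≠ a) (hb : ∀ z, f z ≠ b) :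
    ∃ h : ℂ → ℂ, Differentiable ℂ h ∧ (∀ z (n : ℤ), h z ≠ n) ∧
      ∀ z, f z = a + (b - a) * cexp (2 * Real.pi * I * h z) := by
  have hba : b - a ≠ 0 := sub_ne_zero.2 hab.symm
  have h2πI : 2 * Real.pi * I ≠ 0 := by simp [Real.pi_ne_zero]
  obtain ⟨L, hL, hfL⟩ := ((hf.sub_const a).div_const (b - a)).exists_eq_exp fun z =>
    div_ne_zero (sub_ne_zero.2 (ha z)) hba
  have hf_eq : ∀ z, f z = a + (b - a) * cexp (L z) := fun z => by
    rw [← hfL]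
    field_simp
    ring
  refine ⟨fun z => L z / (2 * Real.pi * I), hL.div_const _, fun z n hn => hb z ?_, fun z => ?_⟩
  · rw [hf_eq, exp_eq_one_iff.2 ⟨n, by rw [← hn, div_mul_cancel₀ _ h2πI]⟩]
    ring
  · rw [hf_eq, mul_div_cancel₀ _ h2πI]

theorem Real.cosh_sq_add_one_le_cosh_add_one_sq {x : ℝ} (hx : 0 ≤ x) :
    Real.cosh x ^ 2 + 1 ≤ Real.cosh (x + 1) ^ 2 := by
  have hsinh₁ : 1 ≤ Real.sinh 1 := Real.self_le_sinh_iff.2 zero_le_one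
  have hcosh : Real.cosh x * Real.cosh 1 ≤ Real.cosh (x + 1) := by
    rw [Real.cosh_add]
    have := Real.sinh_nonneg_iff.2 hx
    nlinarith
  have hx₁ := Real.one_le_cosh x
  have h₁ : 1 ≤ Real.cosh x ^ 2 * Real.sinh 1 ^ 2 :=
    one_le_mul_of_one_le_of_one_le (one_le_pow₀ hx₁) (one_le_pow₀ hsinh₁)
  calc Real.cosh x ^ 2 + 1 ≤ Real.cosh x ^ 2 * (Real.sinh 1 ^ 2 + 1) := by linarith
    _ = (Real.cosh x * Real.cosh 1) ^ 2 := by rw [mul_pow, Real.cosh_sq 1]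
    _ ≤ Real.cosh (x + 1) ^ 2 := by gcongr

theorem Real.exists_cosh_sq_eq_natCast_of_nonneg {x : ℝ} (hx : 0 ≤ x) :
    ∃ t ∈ Icc (x - 1) x, ∃ n : ℕ, Real.cosh t ^ 2 = n := by
  rcases lt_or_ge x 1 with hx₁ | hx₁
  · exact ⟨0, ⟨by linarith, hx⟩, 1, by simp⟩
  obtain ⟨y, hy, rfl⟩ : ∃ y, 0 ≤ y ∧ x = y + 1 := ⟨x - 1, by linarith, by ring⟩
  set n := ⌈Real.cosh y ^ 2⌉₊
  have hn : (n : ℝ) ∈ Icc (Real.cosh y ^ 2) (Real.cosh (y + 1) ^ 2) :=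
    ⟨Nat.le_ceil _, (Nat.ceil_lt_add_one (by positivity)).le.trans
      (Real.cosh_sq_add_one_le_cosh_add_one_sq hy)⟩
  obtain ⟨t, ht, htn⟩ := intermediate_value_Icc (f := fun t => Real.cosh t ^ 2)
    (by linarith : y ≤ y + 1) (by fun_prop) hn
  exact ⟨t, by simpa using ht, n, htn⟩

theorem Complex.cosh_add_int_mul_pi_mul_I_sq (z : ℂ) (m : ℤ) :
    Complex.cosh (z + m * Real.pi * I) ^ 2 = Complex.cosh z ^ 2 := by
  have h := Complex.sin_sq_add_cos_sq (m * Real.pi)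
  rw [Complex.sin_int_mul_pi] at h
  rw [Complex.cosh_add, Complex.cosh_mul_I, Complex.sinh_mul_I, Complex.sin_int_mul_pi]
  linear_combination Complex.cosh z ^ 2 * h

theorem Complex.exists_cosh_sq_eq_natCast_dist_lt_two (c : ℂ) :
    ∃ w : ℂ, (∃ n : ℕ, Complex.cosh w ^ 2 = n) ∧ dist w c < 2 := by
  wlog hc : 0 ≤ c.re generalizing c
  · obtain ⟨w, ⟨n, hn⟩, hw⟩ := this (-c) (by simp; linarith)
    exact ⟨-w, ⟨n, by rwa [Complex.cosh_neg]⟩, by rwa [← dist_neg_neg, neg_neg]⟩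
  obtain ⟨t, ht, n, hn⟩ := Real.exists_cosh_sq_eq_natCast_of_nonneg hc
  set m := round (c.im / Real.pi)
  have hm : |c.im - m * Real.pi| ≤ Real.pi / 2 := by
    rw [show c.im - m * Real.pi = Real.pi * (c.im / Real.pi - m) by field_simp, abs_mul,
      abs_of_pos Real.pi_pos]
    nlinarith [abs_sub_round (c.im / Real.pi), Real.pi_pos]
  refine ⟨t + m * Real.pi * I, ⟨n, ?_⟩, ?_⟩
  · rw [cosh_add_int_mul_pi_mul_I_sq, ← ofReal_cosh, ← ofReal_pow, hn, ofReal_natCast]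
  · rw [dist_eq_re_im, Real.sqrt_lt' two_pos]
    simp only [add_re, ofReal_re, mul_re, I_re, I_im, add_im, ofReal_im, mul_im, intCast_re,
      intCast_im]
    have hre : (t - c.re) ^ 2 ≤ 1 := by nlinarith [ht.1, ht.2]
    have him : (m * Real.pi - c.im) ^ 2 ≤ (Real.pi / 2) ^ 2 := by
      rw [← sq_abs, abs_sub_comm]
      gcongr
    nlinarith [Real.pi_lt_d2, Real.pi_pos]

theorem ball_subset_image_ball_of_norm_deriv_le {G : ℂ → ℂ} {p : ℂ} {r : ℝ}
    (hG : DifferentiableOn ℂ G (ball p r)) (hr : 0 < r)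
    (hbound : ∀ z ∈ ball p r, ‖deriv G z‖ ≤ 2 * ‖deriv G p‖) :
    ball (G p) (‖deriv G p‖ * r / 24) ⊆ G '' ball p r := by
  set m := ‖deriv G p‖
  rcases eq_or_ne (deriv G p) 0 with h₀ | h₀
  · simp [m, h₀]
  have hGp : HasDerivAt G (deriv G p) p := (hG.differentiableAt (ball_mem_nhds p hr)).hasDerivAt
  have hmove : ∀ z ∈ ball p r, ‖G z - G p‖ ≤ 2 * m * r := fun z hz => by
    refine ((convex_ball p r).norm_image_sub_le_of_norm_deriv_le
      (fun w hw => hG.differentiableAt (isOpen_ball.mem_nhds hw)) hbound (mem_ball_self hr)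
      hz).trans ?_
    gcongr
    exact (mem_ball_iff_norm.1 hz).le
  set φ : ℂ → ℂ := fun z => G z - G p - deriv G p * (z - p)
  have hφp : φ p = 0 := by simp [φ]
  have hφ_diff : DifferentiableOn ℂ φ (ball p r) :=
    (hG.sub_const _).sub ((differentiableOn_id.sub_const p).const_mul _)
  have hφ_maps : MapsTo φ (ball p r) (closedBall (φ p) (3 * m * r)) := fun z hz => by
    rw [hφp, mem_closedBall_zero_iff]
    calc ‖φ z‖ ≤ ‖G z - G p‖ + m * ‖z - p‖ := (norm_sub_le _ _).trans_eq (by rw [norm_mul])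
      _ ≤ 2 * m * r + m * r := by gcongr; exacts [hmove z hz, (mem_ball_iff_norm.1 hz).le]
      _ = 3 * m * r := by ring
  have hφ_o : (φ · - φ p) =o[𝓝 p] (fun z => ‖z - p‖ ^ 1) := by
    simpa [hφp, φ, mul_comm] using (hasDerivAt_iff_isLittleO.1 hGp).norm_right
  -- the Schwarz lemma for the double zero of `φ` gives `‖φ z‖ ≤ 3m‖z - p‖² / r`
  have hsphere : ∀ z ∈ sphere p (r / 6), m * r / 12 ≤ ‖G z - G p‖ := fun z hz => by
    have hz' : ‖z - p‖ = r / 6 := mem_sphere_iff_norm.1 hz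
    have hschwarz := dist_le_mul_div_pow_of_mapsTo_ball_of_isLittleO hφ_diff hφ_maps hφ_o
      (sphere_subset_closedBall.trans (closedBall_subset_ball (by linarith)) hz)
    rw [dist_eq_norm, hφp, sub_zero, dist_eq_norm, hz'] at hschwarz
    have hlin : m * (r / 6) ≤ ‖G z - G p‖ + ‖φ z‖ := by
      rw [← hz', ← norm_mul, show deriv G p * (z - p) = (G z - G p) - φ z by simp only [φ]; ring]
      exact norm_sub_le _ _
    have : 3 * m * r * (r / 6 / r) ^ (1 + 1) = m * r / 12 := by field_simp; ring
    linarith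
  have hfreq : ∃ᶠ z in 𝓝 p, G z ≠ G p :=
    (hGp.eventually_ne h₀).frequently.filter_mono nhdsWithin_le_nhds
  calc ball (G p) (m * r / 24) = ball (G p) (m * r / 12 / 2) := by ring_nf
    _ ⊆ G '' closedBall p (r / 6) :=
      (hG.diffContOnCl_ball (closedBall_subset_ball (by linarith))).ball_subset_image_closedBall
        (by positivity) hsphere hfreq
    _ ⊆ G '' ball p r := image_mono (closedBall_subset_ball (by linarith))

theorem exists_ball_subset_range_of_deriv_ne_zero {G : ℂ → ℂ} (hG : Differentiable ℂ G) {z₀ : ℂ}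
    (h₀ : deriv G z₀ ≠ 0) (ρ : ℝ) : ∃ c, ball c ρ ⊆ range G := by
  rcases le_or_gt ρ 0 with hρ | hρ
  · exact ⟨0, by simp [ball_eq_empty.2 hρ]⟩
  have hm₀ : 0 < ‖deriv G z₀‖ := norm_pos_iff.2 h₀
  set R := ‖z₀‖ + 48 * ρ / ‖deriv G z₀‖ with hR
  -- a maximum point `p` of `(R - ‖z‖) * ‖G' z‖` on the closed disk is a point where
  -- `‖G'‖` at most doubles on the disk of radius `r = (R - ‖p‖) / 2` around `p`
  have hz₀ : z₀ ∈ closedBall (0 : ℂ) R := by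
    have : 0 < 48 * ρ / ‖deriv G z₀‖ := by positivity
    rw [mem_closedBall_zero_iff]
    linarith
  have hG' : Continuous (deriv G) := hG.contDiff.continuous_deriv le_top
  obtain ⟨p, hp, hmax⟩ := (isCompact_closedBall (0 : ℂ) R).exists_isMaxOn ⟨z₀, hz₀⟩
    (by fun_prop : Continuous fun z => (R - ‖z‖) * ‖deriv G z‖).continuousOn
  have hKz₀ : (R - ‖z₀‖) * ‖deriv G z₀‖ = 48 * ρ := by rw [hR]; field_simp; ring
  have hKp : 48 * ρ ≤ (R - ‖p‖) * ‖deriv G p‖ := hKz₀ ▸ hmax hz₀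
  set r := (R - ‖p‖) / 2 with hr_def
  have hr : 0 < r := by
    have : 0 ≤ R - ‖p‖ := sub_nonneg.2 (mem_closedBall_zero_iff.1 hp)
    have : R - ‖p‖ ≠ 0 := fun h => by rw [h, zero_mul] at hKp; linarith
    positivity
  have hbound : ∀ z ∈ ball p r, ‖deriv G z‖ ≤ 2 * ‖deriv G p‖ := fun z hz => by
    have hzp : ‖z‖ < ‖p‖ + r := by
      have := norm_le_norm_add_norm_sub' z p
      linarith [mem_ball_iff_norm.1 hz]
    have hzR : r < R - ‖z‖ := by linarith
    have hKz : (R - ‖z‖) * ‖deriv G z‖ ≤ (R - ‖p‖) * ‖deriv G p‖ :=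
      hmax (mem_closedBall_zero_iff.2 (by linarith))
    have : r * ‖deriv G z‖ ≤ r * (2 * ‖deriv G p‖) := by
      calc r * ‖deriv G z‖ ≤ (R - ‖z‖) * ‖deriv G z‖ := by gcongr
        _ ≤ (R - ‖p‖) * ‖deriv G p‖ := hKz
        _ = r * (2 * ‖deriv G p‖) := by rw [hr_def]; ring
    exact le_of_mul_le_mul_left this hr
  refine ⟨G p, (ball_subset_ball ?_).trans
    ((ball_subset_image_ball_of_norm_deriv_le hG.differentiableOn hr hbound).trans
      (image_subset_range _ _))⟩
  rw [hr_def]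
  linarith

/-- Little Picard theorem: an entire function omitting two distinct values is constant. -/
theorem little_picard (f : ℂ → ℂ) (hf : Differentiable ℂ f)
    (a b : ℂ) (hab : a ≠ b)
    (ha : ∀ z : ℂ, f z ≠ a) (hb : ∀ z : ℂ, f z ≠ b) :
    ∃ c : ℂ, ∀ z : ℂ, f z = c := by
  obtain ⟨h, hh, hh_int, hf_eq⟩ := hf.exists_lift_forall_ne_intCast hab ha hb
  obtain ⟨G, hG, hGh⟩ := hh.exists_cosh_sq_eq (fun z => by simpa using hh_int z 0)
    (fun z => by simpa using hh_int z 1)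
  have hG' : ∀ z₀, deriv G z₀ = 0 := by
    intro z₀
    by_contra h₀
    obtain ⟨c, hc⟩ := exists_ball_subset_range_of_deriv_ne_zero hG h₀ 2
    obtain ⟨w, ⟨n, hn⟩, hw⟩ := Complex.exists_cosh_sq_eq_natCast_dist_lt_two c
    obtain ⟨z, rfl⟩ := hc (mem_ball.2 hw)
    exact hh_int z n (by rw [← hGh, hn, Int.cast_natCast])
  refine ⟨f 0, fun z => ?_⟩
  rw [hf_eq, hf_eq 0, ← hGh, ← hGh, is_const_of_deriv_eq_zero hG hG' z 0]
end
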